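/- arXiv:1606.03429 — 3 statements merged into one kernel-verified Lean document; each statement's English description precedes it below -/
import Mathlib

section
/- Let R be a graded ring supported in non-negative degrees, M a graded R-module with M_n = 0 for n sufficiently small, N a submodule of M (not necessarily homogeneous), and {x_i} a collection of elements of N. If the x_i form a Gröbner basis for N (i.e., the initial terms in(x_i) generate the initial submodule in(N)), then every element of N admits a reduced expression y = Σ a_i x_i with deg(a_i) + deg(x_i) ≤ deg(y) for all i. -/
open DirectSum

section Defs

variable {A : Type*} [CommRing A] (𝒜 : ℤ → AddSubgroup A) [GradedRing 𝒜]
variable {M : Type*} [AddCommGroup M] [Module A M] (ℳ : ℤ → AddSubgroup M)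
  [DirectSum.Decomposition ℳ]

/-- The degree of an element of a graded object: the largest `n` whose homogeneous
component is nonzero (junk value for `x = 0`). -/
noncomputable def mdeg {σ M : Type*} [AddCommMonoid M] [SetLike σ M] [AddSubmonoidClass σ M]
    (ℳ : ℤ → σ) [DirectSum.Decomposition ℳ] (x : M) : ℤ :=
  sSup {n : ℤ | (DirectSum.decompose ℳ x n : M) ≠ 0}

/-- The initial (top-degree) term of an element. -/
noncomputable def ini {σ M : Type*} [AddCommMonoid M] [SetLike σ M] [AddSubmonoidClass σ M]
    (ℳ : ℤ → σ) [DirectSum.Decomposition ℳ] (x : M) : M :=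
  (DirectSum.decompose ℳ x (mdeg ℳ x) : M)

/-- The initial submodule of a submodule `N`: generated by initial terms of nonzero
elements of `N`. -/
def iniSub (N : Submodule A M) : Submodule A M :=
  Submodule.span A {m : M | ∃ x ∈ N, x ≠ 0 ∧ ini ℳ x = m}

/-- The ring grading is supported in non-negative degrees. -/
def RingNonnegGraded : Prop := ∀ n < (0 : ℤ), ∀ a ∈ 𝒜 n, a = (0 : A)

/-- The module grading is bounded below. -/
def ModuleBddBelow : Prop := ∃ n₀ : ℤ, ∀ n < n₀, ∀ m ∈ ℳ n, m = (0 : M)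

/-- A family of elements of `N` is a Gröbner basis for `N`. -/
def IsGrobnerBasis {I : Type*} (N : Submodule A M) (x : I → M) : Prop :=
  (∀ i, x i ∈ N) ∧
    Submodule.span A (Set.range fun i => ini ℳ (x i)) = iniSub ℳ N

/-- `a` gives a reduced expression `y = ∑ aᵢ xᵢ` with `deg aᵢ + deg xᵢ ≤ deg y`. -/
def IsReducedExpr {I : Type*} (x : I → M) (y : M) (a : I →₀ A) : Prop :=
  y = a.sum (fun i c => c • x i) ∧
    ∀ i ∈ a.support, mdeg 𝒜 (a i) + mdeg ℳ (x i) ≤ mdeg ℳ y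

/-- Set version of a Gröbner basis. -/
def IsGrobnerBasisSet (N : Submodule A M) (s : Set M) : Prop :=
  s ⊆ (N : Set M) ∧ Submodule.span A (ini ℳ '' s) = iniSub ℳ N

/-- `y` has a reduced expression in terms of the elements of `s`. -/
def HasReducedExprSet (s : Set M) (y : M) : Prop :=
  ∃ a : M →₀ A, ↑a.support ⊆ s ∧ y = a.sum (fun m c => c • m) ∧
    ∀ m ∈ a.support, mdeg 𝒜 (a m) + mdeg ℳ m ≤ mdeg ℳ y

/-- A submodule is homogeneous when it contains all homogeneous components of its
elements. -/
def IsHomogSubmodule (N : Submodule A M) : Prop :=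
  ∀ x ∈ N, ∀ n : ℤ, (DirectSum.decompose ℳ x n : M) ∈ N

/-- Graded-coherent: finitely generated, and every finitely generated homogeneous
submodule is finitely presented. -/
def GradedCoherent : Prop :=
  Module.Finite A M ∧ ∀ N : Submodule A M, N.FG → IsHomogSubmodule ℳ N →
    Module.FinitePresentation A N

/-- Gröbner-coherent: graded-coherent, and every finitely generated (possibly
inhomogeneous) submodule admits a finite Gröbner basis. -/
def GrobnerCoherent : Prop :=
  GradedCoherent (A := A) ℳ ∧ ∀ N : Submodule A M, N.FG →
    ∃ s : Finset M, IsGrobnerBasisSet ℳ N ↑s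

/-- A homogeneous generating family of syzygies of the initial terms of the `x i`
(with the free module graded by `deg eᵢ = deg xᵢ`). -/
def IsHomogSyzygyGens {I J : Type*} (x : I → M) (c : J → I →₀ A) : Prop :=
  (∀ j, ∃ d : ℤ, ∀ i, c j i ∈ 𝒜 (d - mdeg ℳ (x i))) ∧
    Submodule.span A (Set.range c) =
      LinearMap.ker (Finsupp.linearCombination A fun i => ini ℳ (x i))

/-- Set version of a homogeneous generating set of syzygies of initial terms. -/
def IsHomogSyzygyGensSet (X : Set M) (C : Set (M →₀ A)) : Prop :=
  (∀ c ∈ C, ↑c.support ⊆ X) ∧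
  (∀ c ∈ C, ∃ d : ℤ, ∀ m : M, c m ∈ 𝒜 (d - mdeg ℳ m)) ∧
  Submodule.span A C =
    Finsupp.supported A A X ⊓
      LinearMap.ker (Finsupp.linearCombination A fun m : M => ini ℳ m)

/-- The elements `z = ∑ c m • m` attached to a set of syzygies `C`. -/
def zElems (C : Set (M →₀ A)) : Set M :=
  (fun c : M →₀ A => c.sum fun m coeff => coeff • m) '' C

/-- One step of Buchberger's algorithm: adjoin the `z`-elements of a homogeneous
generating set of syzygies. -/
def BuchbergerStep (X Y : Set M) : Prop :=
  ∃ C : Set (M →₀ A), IsHomogSyzygyGensSet 𝒜 ℳ X C ∧ Y = X ∪ zElems C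

end Defs

/-!
Induct on an upper bound `d` for the degrees of the components of `y ∈ N`; since `M` is
bounded below, `y = 0` once `d` is small enough. The degree-`d` component of `y` lies in
`in(N)`, so it equals `∑ bᵢ • in(xᵢ)` with `bᵢ` homogeneous of degree `d - deg xᵢ`.
Then `y - ∑ bᵢ • xᵢ` lies in `N` and has no component in degrees `≥ d`, and the
coefficients `bᵢ` respect the degree bound of a reduced expression.
-/

section Degree

variable {σ M : Type*} [AddCommMonoid M] [SetLike σ M] [AddSubmonoidClass σ M]
  (ℳ : ℤ → σ) [DirectSum.Decomposition ℳ]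

/-- Unlike `mdeg ℳ z ≤ d`, this is meaningful for `z = 0`. -/
def DegreeLE (z : M) (d : ℤ) : Prop :=
  ∀ n, d < n → (decompose ℳ z n : M) = 0

variable {ℳ}

theorem coe_decompose_sum_apply {ι : Type*} (s : Finset ι) (f : ι → M) (n : ℤ) :
    (decompose ℳ (∑ i ∈ s, f i) n : M) = ∑ i ∈ s, (decompose ℳ (f i) n : M) := by
  rw [decompose_sum, DFinsupp.finsetSum_apply, AddSubmonoidClass.coe_finsetSum]

theorem finite_setOf_coe_decompose_ne_zero (z : M) :
    {n : ℤ | (decompose ℳ z n : M) ≠ 0}.Finite := by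
  classical
  exact (decompose ℳ z).support.finite_toSet.subset fun n hn => by simpa using hn

theorem exists_coe_decompose_ne_zero {z : M} (hz : z ≠ 0) :
    ∃ n, (decompose ℳ z n : M) ≠ 0 := by
  by_contra! h
  refine hz ((decompose ℳ).injective ?_)
  ext n
  simp [h n]

theorem DegreeLE.mono {z : M} {d e : ℤ} (h : DegreeLE ℳ z d) (hde : d ≤ e) : DegreeLE ℳ z e :=
  fun n hn => h n (hde.trans_lt hn)

theorem degreeLE_of_mem {z : M} {d : ℤ} (hz : z ∈ ℳ d) : DegreeLE ℳ z d :=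
  fun _ hn => decompose_of_mem_ne ℳ hz hn.ne

theorem degreeLE_zero (d : ℤ) : DegreeLE ℳ (0 : M) d :=
  fun _ _ => by simp

theorem DegreeLE.add {z w : M} {d : ℤ} (hz : DegreeLE ℳ z d) (hw : DegreeLE ℳ w d) :
    DegreeLE ℳ (z + w) d := by
  intro n hn
  simp [hz n hn, hw n hn]

theorem degreeLE_sum {ι : Type*} {s : Finset ι} {f : ι → M} {d : ℤ}
    (h : ∀ i ∈ s, DegreeLE ℳ (f i) d) : DegreeLE ℳ (∑ i ∈ s, f i) d := by
  intro n hn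
  rw [coe_decompose_sum_apply]
  exact Finset.sum_eq_zero fun i hi => h i hi n hn

theorem degreeLE_mdeg (z : M) : DegreeLE ℳ z (mdeg ℳ z) := by
  intro n hn
  by_contra hzn
  exact hn.not_ge (le_csSup (finite_setOf_coe_decompose_ne_zero z).bddAbove hzn)

theorem mdeg_le_of_degreeLE {z : M} {d : ℤ} (hz : z ≠ 0) (h : DegreeLE ℳ z d) :
    mdeg ℳ z ≤ d :=
  csSup_le (exists_coe_decompose_ne_zero hz) fun n hn => not_lt.mp fun hdn => hn (h n hdn)

theorem DegreeLE.mdeg_eq {z : M} {d : ℤ} (h : DegreeLE ℳ z d)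
    (hzd : (decompose ℳ z d : M) ≠ 0) : mdeg ℳ z = d := by
  have hz : z ≠ 0 := by
    rintro rfl
    simp at hzd
  exact (mdeg_le_of_degreeLE hz h).antisymm
    (le_csSup (finite_setOf_coe_decompose_ne_zero z).bddAbove hzd)

theorem DegreeLE.eq_zero {z : M} {d n₀ : ℤ} (hℳ : ∀ n < n₀, ∀ m ∈ ℳ n, m = 0)
    (h : DegreeLE ℳ z d) (hd : d < n₀) : z = 0 := by
  by_contra hz
  obtain ⟨n, hn⟩ := exists_coe_decompose_ne_zero (ℳ := ℳ) hz
  rcases le_or_gt n d with hnd | hdn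
  · exact hn (hℳ n (hnd.trans_lt hd) _ (SetLike.coe_mem _))
  · exact hn (h n hdn)

end Degree

theorem DegreeLE.sub_of_coe_decompose_eq {σ M : Type*} [AddCommGroup M] [SetLike σ M]
    [AddSubgroupClass σ M] {ℳ : ℤ → σ} [DirectSum.Decomposition ℳ] {z w : M} {d : ℤ}
    (hz : DegreeLE ℳ z d) (hw : DegreeLE ℳ w d)
    (hzw : (decompose ℳ z d : M) = decompose ℳ w d) : DegreeLE ℳ (z - w) (d - 1) := by
  intro n hn
  rcases (show d = n ∨ d < n by omega) with rfl | hdn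
  · simp [decompose_sub, hzw]
  · simp [decompose_sub, hz n hdn, hw n hdn]

section GradedSMul

variable {σA σ A M : Type*} [Semiring A] [AddCommMonoid M] [Module A M]
  [SetLike σA A] [SetLike σ M] [AddSubmonoidClass σ M]
  {𝒜 : ℤ → σA} {ℳ : ℤ → σ} [DirectSum.Decomposition ℳ] [SetLike.GradedSMul 𝒜 ℳ]

theorem coe_decompose_smul_of_mem_left {a : A} {e : ℤ} (ha : a ∈ 𝒜 e) (z : M) (n : ℤ) :
    (decompose ℳ (a • z) n : M) = a • (decompose ℳ z (n - e) : M) := by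
  induction z using DirectSum.Decomposition.inductionOn ℳ with
  | zero => simp
  | @homogeneous i z =>
    have haz : a • (z : M) ∈ ℳ (e + i) := SetLike.GradedSMul.smul_mem ha z.2
    by_cases hn : n = e + i
    · subst hn
      rw [decompose_of_mem_same ℳ haz, add_sub_cancel_left, decompose_of_mem_same ℳ z.2]
    · rw [decompose_of_mem_ne ℳ haz (Ne.symm hn), decompose_of_mem_ne ℳ z.2 (by omega),
        smul_zero]
  | add z w hz hw => simp [smul_add, hz, hw]

theorem DegreeLE.smul_of_mem {a : A} {z : M} {e d : ℤ} (ha : a ∈ 𝒜 e) (h : DegreeLE ℳ z d) :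
    DegreeLE ℳ (a • z) (e + d) := by
  intro n hn
  rw [coe_decompose_smul_of_mem_left ha, h (n - e) (by omega), smul_zero]

variable [AddSubmonoidClass σA A] [DirectSum.Decomposition 𝒜]

theorem coe_decompose_smul_of_mem_right {z : M} {d : ℤ} (hz : z ∈ ℳ d) (a : A) (n : ℤ) :
    (decompose ℳ (a • z) n : M) = (decompose 𝒜 a (n - d) : A) • z := by
  induction a using DirectSum.Decomposition.inductionOn 𝒜 with
  | zero => simp
  | @homogeneous i a =>
    have haz : (a : A) • z ∈ ℳ (i + d) := SetLike.GradedSMul.smul_mem a.2 hz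
    by_cases hn : n = i + d
    · subst hn
      rw [decompose_of_mem_same ℳ haz, add_sub_cancel_right, decompose_of_mem_same 𝒜 a.2]
    · rw [decompose_of_mem_ne ℳ haz (Ne.symm hn), decompose_of_mem_ne 𝒜 a.2 (by omega),
        zero_smul]
  | add a b ha hb => simp [add_smul, ha, hb]

theorem exists_homogeneous_coeffs_of_mem_span {I : Type*} {g : I → M} {e : I → ℤ}
    (hg : ∀ i, g i ∈ ℳ (e i)) {z : M} {d : ℤ} (hz : z ∈ ℳ d)
    (hzg : z ∈ Submodule.span A (Set.range g)) :
    ∃ b : I →₀ A, (∀ i, b i ∈ 𝒜 (d - e i)) ∧ (b.sum fun i r => r • g i) = z := by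
  classical
  obtain ⟨c, rfl⟩ := Finsupp.mem_span_range_iff_exists_finsupp.mp hzg
  have hsupp : ∀ i, (decompose 𝒜 (c i) (d - e i) : A) ≠ 0 → i ∈ c.support := fun i hi =>
    Finsupp.mem_support_iff.mpr fun hci => hi (by simp [hci])
  refine ⟨Finsupp.onFinset c.support _ hsupp, fun i => SetLike.coe_mem _, ?_⟩
  rw [Finsupp.onFinset_sum hsupp fun i => zero_smul A (g i)]
  conv_rhs => rw [← decompose_of_mem_same ℳ hz]
  rw [Finsupp.sum, coe_decompose_sum_apply]
  exact Finset.sum_congr rfl fun i _ => (coe_decompose_smul_of_mem_right (hg i) _ _).symm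

end GradedSMul

section Grobner

variable {A M : Type*} [CommRing A] {𝒜 : ℤ → AddSubgroup A} [DirectSum.Decomposition 𝒜]
  [AddCommGroup M] [Module A M] {ℳ : ℤ → AddSubgroup M} [DirectSum.Decomposition ℳ]
  [SetLike.GradedSMul 𝒜 ℳ]

theorem coe_decompose_mem_iniSub {N : Submodule A M} {y : M} {d : ℤ} (hy : y ∈ N)
    (hyd : DegreeLE ℳ y d) : (decompose ℳ y d : M) ∈ iniSub ℳ N := by
  by_cases hyd0 : (decompose ℳ y d : M) = 0
  · rw [hyd0]
    exact zero_mem _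
  · refine Submodule.subset_span ⟨y, hy, by rintro rfl; simp at hyd0, ?_⟩
    rw [ini, hyd.mdeg_eq hyd0]

variable {I : Type*} {N : Submodule A M} {x : I → M}

theorem IsGrobnerBasis.exists_degreeLE_sub (hGB : IsGrobnerBasis ℳ N x) {y : M} {d : ℤ}
    (hy : y ∈ N) (hyd : DegreeLE ℳ y d) :
    ∃ b : I →₀ A, (∀ i, b i ∈ 𝒜 (d - mdeg ℳ (x i))) ∧
      DegreeLE ℳ (y - b.sum fun i r => r • x i) (d - 1) := by
  have hspan : (decompose ℳ y d : M) ∈ Submodule.span A (Set.range fun i => ini ℳ (x i)) :=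
    hGB.2 ▸ coe_decompose_mem_iniSub hy hyd
  obtain ⟨b, hb, hbd⟩ := exists_homogeneous_coeffs_of_mem_span (𝒜 := 𝒜)
    (fun i => SetLike.coe_mem (decompose ℳ (x i) (mdeg ℳ (x i)))) (SetLike.coe_mem _) hspan
  refine ⟨b, hb, hyd.sub_of_coe_decompose_eq ?_ ?_⟩
  · exact degreeLE_sum fun i _ =>
      ((degreeLE_mdeg (x i)).smul_of_mem (hb i)).mono (by omega)
  · rw [Finsupp.sum, coe_decompose_sum_apply, ← hbd, Finsupp.sum]
    refine Finset.sum_congr rfl fun i _ => ?_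
    rw [coe_decompose_smul_of_mem_left (hb i), sub_sub_cancel]

theorem IsGrobnerBasis.exists_sum_smul_of_degreeLE (hGB : IsGrobnerBasis ℳ N x)
    (hM : ModuleBddBelow ℳ) (d : ℤ) :
    ∀ y ∈ N, DegreeLE ℳ y d → ∃ a : I →₀ A,
      y = (a.sum fun i r => r • x i) ∧ ∀ i, DegreeLE 𝒜 (a i) (d - mdeg ℳ (x i)) := by
  obtain ⟨n₀, hn₀⟩ := hM
  have of_lt : ∀ d < n₀, ∀ y, DegreeLE ℳ y d → ∃ a : I →₀ A,
      y = (a.sum fun i r => r • x i) ∧ ∀ i, DegreeLE 𝒜 (a i) (d - mdeg ℳ (x i)) :=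
    fun d hd y hyd => ⟨0, by simp [hyd.eq_zero hn₀ hd], fun i => degreeLE_zero _⟩
  refine Int.inductionOn' d (n₀ - 1) (fun y _ hyd => of_lt _ (by omega) y hyd) ?_
    (fun k hk _ y _ hyd => of_lt _ (by omega) y hyd)
  intro k _ ih y hy hyd
  obtain ⟨b, hb, hdeg⟩ := hGB.exists_degreeLE_sub (𝒜 := 𝒜) hy hyd
  have hsum : (b.sum fun i r => r • x i) ∈ N := N.sum_mem fun i _ => N.smul_mem _ (hGB.1 i)
  obtain ⟨a, ha, hadeg⟩ := ih _ (N.sub_mem hy hsum) (by rwa [add_sub_cancel_right] at hdeg)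
  refine ⟨a + b, ?_, fun i => ((hadeg i).mono (by omega)).add (degreeLE_of_mem (hb i))⟩
  rw [Finsupp.sum_add_index' (fun i => zero_smul A (x i)) fun i r r' => add_smul r r' (x i),
    ← ha, sub_add_cancel]

end Grobner

theorem stmt_0_general {A M : Type*} [CommRing A] (𝒜 : ℤ → AddSubgroup A) [GradedRing 𝒜]
    [AddCommGroup M] [Module A M] (ℳ : ℤ → AddSubgroup M) [DirectSum.Decomposition ℳ]
    [SetLike.GradedSMul 𝒜 ℳ]
    (hM : ModuleBddBelow ℳ)
    {I : Type*} (N : Submodule A M) (x : I → M)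
    (hGB : IsGrobnerBasis ℳ N x) :
    ∀ y ∈ N, ∃ a : I →₀ A, IsReducedExpr 𝒜 ℳ x y a := by
  intro y hy
  obtain ⟨a, hya, ha⟩ := hGB.exists_sum_smul_of_degreeLE (𝒜 := 𝒜) hM _ y hy (degreeLE_mdeg y)
  refine ⟨a, hya, fun i hi => ?_⟩
  have := mdeg_le_of_degreeLE (Finsupp.mem_support_iff.mp hi) (ha i)
  omega

/-- If `{xᵢ}` is a Gröbner basis for `N`, then every element of `N` admits a reduced
expression in terms of the `xᵢ`. -/
theorem stmt_0 {A M : Type*} [CommRing A] (𝒜 : ℤ → AddSubgroup A) [GradedRing 𝒜]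
    [AddCommGroup M] [Module A M] (ℳ : ℤ → AddSubgroup M) [DirectSum.Decomposition ℳ]
    [SetLike.GradedSMul 𝒜 ℳ]
    (hA : RingNonnegGraded 𝒜) (hM : ModuleBddBelow ℳ)
    {I : Type*} (N : Submodule A M) (x : I → M)
    (hGB : IsGrobnerBasis ℳ N x) :
    ∀ y ∈ N, ∃ a : I →₀ A, IsReducedExpr 𝒜 ℳ x y a :=
  stmt_0_general 𝒜 ℳ hM N x hGB
end

section
/- Let R be a graded ring supported in non-negative degrees, M a graded R-module bounded below in degree, N a submodule of M, and {x_i} a collection of elements of N. If every element of N admits a reduced expression in terms of the x_i, then {x_i} is a Gröbner basis for N. -/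
open DirectSum

section Degree

variable {σ M : Type*} [AddCommMonoid M] [SetLike σ M] [AddSubmonoidClass σ M]
  (ℳ : ℤ → σ) [DirectSum.Decomposition ℳ]

lemma finite_setOf_decompose_ne_zero (x : M) :
    {n : ℤ | (decompose ℳ x n : M) ≠ 0}.Finite := by
  classical
  refine (decompose ℳ x).support.finite_toSet.subset fun n hn => ?_
  simpa [DFinsupp.mem_support_iff] using hn

variable {ℳ} in
lemma le_mdeg {x : M} {n : ℤ} (h : (decompose ℳ x n : M) ≠ 0) : n ≤ mdeg ℳ x :=
  le_csSup (finite_setOf_decompose_ne_zero ℳ x).bddAbove h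

variable {ℳ} in
lemma le_mdeg_of_mem_support [∀ (i) (x : ℳ i), Decidable (x ≠ 0)] {x : M} {n : ℤ}
    (h : n ∈ (decompose ℳ x).support) : n ≤ mdeg ℳ x :=
  le_mdeg (by simpa [DFinsupp.mem_support_iff] using h)

lemma ini_zero : ini ℳ (0 : M) = 0 := by
  simp [ini]

lemma coe_decompose_of_mem {x : M} {i : ℤ} (hx : x ∈ ℳ i) (j : ℤ) :
    (decompose ℳ x j : M) = if i = j then x else 0 := by
  split_ifs with h
  · exact h ▸ decompose_of_mem_same ℳ hx
  · exact decompose_of_mem_ne ℳ hx h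

end Degree

section GradedSMul

variable {R M σR σM : Type*} [Semiring R] [AddCommMonoid M] [Module R M]
  [SetLike σR R] [AddSubmonoidClass σR R] (𝒜 : ℤ → σR) [DirectSum.Decomposition 𝒜]
  [SetLike σM M] [AddSubmonoidClass σM M] (ℳ : ℤ → σM) [DirectSum.Decomposition ℳ]
  [SetLike.GradedSMul 𝒜 ℳ]

open scoped Classical in
lemma coe_decompose_smul (a : R) (m : M) (D : ℤ) :
    (decompose ℳ (a • m) D : M) =
      ∑ p ∈ (decompose 𝒜 a).support ×ˢ (decompose ℳ m).support,
        if p.1 + p.2 = D then (decompose 𝒜 a p.1 : R) • (decompose ℳ m p.2 : M) else 0 := by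
  conv_lhs => rw [← sum_support_decompose 𝒜 a, ← sum_support_decompose ℳ m]
  simp_rw [Finset.sum_smul, Finset.smul_sum]
  rw [← Finset.sum_product', decompose_sum, DFinsupp.finsetSum_apply,
    AddSubmonoidClass.coe_finsetSum]
  refine Finset.sum_congr rfl fun p _ => coe_decompose_of_mem ℳ ?_ D
  exact SetLike.GradedSMul.smul_mem (decompose 𝒜 a p.1).2 (decompose ℳ m p.2).2

lemma coe_decompose_smul_of_lt {a : R} {m : M} {D : ℤ} (hD : mdeg 𝒜 a + mdeg ℳ m < D) :
    (decompose ℳ (a • m) D : M) = 0 := by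
  classical
  rw [coe_decompose_smul 𝒜]
  refine Finset.sum_eq_zero fun p hp => if_neg ?_
  obtain ⟨hn, hk⟩ := Finset.mem_product.1 hp
  have := le_mdeg_of_mem_support hn
  have := le_mdeg_of_mem_support hk
  omega

lemma coe_decompose_smul_mdeg_add (a : R) (m : M) :
    (decompose ℳ (a • m) (mdeg 𝒜 a + mdeg ℳ m) : M) = ini 𝒜 a • ini ℳ m := by
  classical
  rw [coe_decompose_smul 𝒜, Finset.sum_eq_single (mdeg 𝒜 a, mdeg ℳ m)]
  · exact if_pos rfl
  · rintro ⟨n, k⟩ hp hne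
    obtain ⟨hn, hk⟩ := Finset.mem_product.1 hp
    have := le_mdeg_of_mem_support hn
    have := le_mdeg_of_mem_support hk
    refine if_neg fun h => hne ?_
    simp only [Prod.mk.injEq]
    omega
  · intro hp
    rw [if_pos rfl]
    rcases not_and_or.1 (Finset.mem_product.not.1 hp) with h | h
    · rw [DFinsupp.notMem_support_iff.1 h, ZeroMemClass.coe_zero, zero_smul]
    · rw [DFinsupp.notMem_support_iff.1 h, ZeroMemClass.coe_zero, smul_zero]

end GradedSMul

section Grobner

variable {A M : Type*} [CommRing A] {𝒜 : ℤ → AddSubgroup A} [GradedRing 𝒜]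
  [AddCommGroup M] [Module A M] {ℳ : ℤ → AddSubgroup M} [DirectSum.Decomposition ℳ]

lemma ini_mem_iniSub {N : Submodule A M} {y : M} (hy : y ∈ N) : ini ℳ y ∈ iniSub ℳ N := by
  by_cases h : y = 0
  · rw [h, ini_zero]
    exact zero_mem _
  · exact Submodule.subset_span ⟨y, hy, h, rfl⟩

-- In degree `deg y`, a term `aᵢ xᵢ` with `deg aᵢ + deg xᵢ < deg y` contributes nothing and
-- one with `deg aᵢ + deg xᵢ = deg y` contributes `in(aᵢ) in(xᵢ)`.
lemma IsReducedExpr.ini_mem_span [SetLike.GradedSMul 𝒜 ℳ] {I : Type*} {x : I → M} {y : M}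
    {a : I →₀ A} (h : IsReducedExpr 𝒜 ℳ x y a) :
    ini ℳ y ∈ Submodule.span A (Set.range fun i => ini ℳ (x i)) := by
  obtain ⟨hy, hdeg⟩ := h
  have hcomp (D : ℤ) :
      (decompose ℳ y D : M) = ∑ i ∈ a.support, (decompose ℳ (a i • x i) D : M) := by
    rw [hy, Finsupp.sum, decompose_sum, DFinsupp.finsetSum_apply, AddSubmonoidClass.coe_finsetSum]
  rw [ini, hcomp]
  refine Submodule.sum_mem _ fun i hi => ?_
  rcases (hdeg i hi).lt_or_eq with hlt | heq
  · rw [coe_decompose_smul_of_lt 𝒜 ℳ hlt]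
    exact zero_mem _
  · rw [← heq, coe_decompose_smul_mdeg_add]
    exact Submodule.smul_mem _ _ (Submodule.subset_span ⟨i, rfl⟩)

end Grobner

theorem stmt_1_general {A M : Type*} [CommRing A] (𝒜 : ℤ → AddSubgroup A) [GradedRing 𝒜]
    [AddCommGroup M] [Module A M] (ℳ : ℤ → AddSubgroup M) [DirectSum.Decomposition ℳ]
    [SetLike.GradedSMul 𝒜 ℳ]
    {I : Type*} (N : Submodule A M) (x : I → M) (hx : ∀ i, x i ∈ N)
    (hred : ∀ y ∈ N, ∃ a : I →₀ A, IsReducedExpr 𝒜 ℳ x y a) :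
    IsGrobnerBasis ℳ N x := by
  refine ⟨hx, le_antisymm ?_ ?_⟩
  · exact Submodule.span_le.2 <| Set.range_subset_iff.2 fun i => ini_mem_iniSub (hx i)
  · refine Submodule.span_le.2 ?_
    rintro _ ⟨y, hy, -, rfl⟩
    obtain ⟨a, ha⟩ := hred y hy
    exact ha.ini_mem_span

/-- If every element of `N` admits a reduced expression in terms of the `xᵢ ∈ N`, then
`{xᵢ}` is a Gröbner basis for `N`. -/
theorem stmt_1 {A M : Type*} [CommRing A] (𝒜 : ℤ → AddSubgroup A) [GradedRing 𝒜]
    [AddCommGroup M] [Module A M] (ℳ : ℤ → AddSubgroup M) [DirectSum.Decomposition ℳ]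
    [SetLike.GradedSMul 𝒜 ℳ]
    (hA : RingNonnegGraded 𝒜) (hM : ModuleBddBelow ℳ)
    {I : Type*} (N : Submodule A M) (x : I → M) (hx : ∀ i, x i ∈ N)
    (hred : ∀ y ∈ N, ∃ a : I →₀ A, IsReducedExpr 𝒜 ℳ x y a) :
    IsGrobnerBasis ℳ N x :=
  stmt_1_general 𝒜 ℳ N x hx hred
end

section
/- Let M be a Gröbner-coherent graded R-module and M' ⊆ M a finitely generated homogeneous submodule. Then M' is Gröbner-coherent. -/
open DirectSum

/-!
An injective map that sends each `ℳ' n` into `ℳ n` commutes with taking homogeneous components,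
hence preserves degrees and initial terms. The inclusion `M' → M` is such a map, so homogeneous
finitely generated submodules of `M'` are finitely presented because their images in `M` are, and
the preimage of a finite Gröbner basis of the image of a submodule of `M'` is a Gröbner basis of it.
-/

section GradedMap

variable {ι : Type*} [DecidableEq ι] {M M' σ σ' F : Type*} [AddCommMonoid M] [AddCommMonoid M']
  [SetLike σ M] [AddSubmonoidClass σ M] [SetLike σ' M'] [AddSubmonoidClass σ' M']
  [FunLike F M' M] [AddMonoidHomClass F M' M]

theorem decompose_map_apply (ℳ : ι → σ) (ℳ' : ι → σ') [DirectSum.Decomposition ℳ]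
    [DirectSum.Decomposition ℳ'] {f : F} (hf : ∀ i, ∀ y ∈ ℳ' i, f y ∈ ℳ i) (y : M') (n : ι) :
    (decompose ℳ (f y) n : M) = f (decompose ℳ' y n) := by
  induction y using DirectSum.Decomposition.inductionOn ℳ' with
  | zero => simp
  | @homogeneous i y =>
    obtain ⟨y, hy⟩ := y
    by_cases hin : i = n
    · subst hin
      rw [decompose_of_mem_same ℳ (hf _ y hy), decompose_of_mem_same ℳ' hy]
    · rw [decompose_of_mem_ne ℳ (hf _ y hy) hin, decompose_of_mem_ne ℳ' hy hin, map_zero]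
  | add y z hy hz => simp [hy, hz]

variable (ℳ : ℤ → σ) (ℳ' : ℤ → σ') [DirectSum.Decomposition ℳ] [DirectSum.Decomposition ℳ']
  {f : F} (hf : ∀ n, ∀ y ∈ ℳ' n, f y ∈ ℳ n) (hinj : Function.Injective f)
include hf hinj

theorem mdeg_map (y : M') : mdeg ℳ (f y) = mdeg ℳ' y := by
  unfold mdeg
  congr 1
  ext n
  simp only [Set.mem_ofPred_eq, decompose_map_apply ℳ ℳ' hf, ne_eq,
    map_eq_zero_iff f hinj, ZeroMemClass.coe_eq_zero]

theorem ini_map (y : M') : ini ℳ (f y) = f (ini ℳ' y) := by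
  rw [ini, ini, mdeg_map ℳ ℳ' hf hinj, decompose_map_apply ℳ ℳ' hf]

end GradedMap

section GradedSubmodule

variable {A M M' : Type*} [CommRing A] [AddCommGroup M] [Module A M] [AddCommGroup M']
  [Module A M'] {ℳ : ℤ → AddSubgroup M} {ℳ' : ℤ → AddSubgroup M'}
  [DirectSum.Decomposition ℳ] [DirectSum.Decomposition ℳ'] {f : M' →ₗ[A] M}

theorem IsHomogSubmodule.map (hf : ∀ n, ∀ y ∈ ℳ' n, f y ∈ ℳ n) {N : Submodule A M'}
    (hN : IsHomogSubmodule ℳ' N) : IsHomogSubmodule ℳ (N.map f) := by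
  rintro _ ⟨y, hy, rfl⟩ n
  rw [decompose_map_apply ℳ ℳ' hf]
  exact Submodule.mem_map_of_mem (hN y hy n)

variable (hf : ∀ n, ∀ y ∈ ℳ' n, f y ∈ ℳ n) (hinj : Function.Injective f)
include hf hinj

theorem iniSub_map (N : Submodule A M') : (iniSub ℳ' N).map f = iniSub ℳ (N.map f) := by
  rw [iniSub, iniSub, Submodule.map_span]
  congr 1
  ext m
  constructor
  · rintro ⟨_, ⟨y, hy, hy0, rfl⟩, rfl⟩
    exact ⟨f y, Submodule.mem_map_of_mem hy, (map_ne_zero_iff f hinj).mpr hy0,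
      ini_map ℳ ℳ' hf hinj y⟩
  · rintro ⟨_, ⟨y, hy, rfl⟩, hy0, rfl⟩
    exact ⟨ini ℳ' y, ⟨y, hy, (map_ne_zero_iff f hinj).mp hy0, rfl⟩,
      (ini_map ℳ ℳ' hf hinj y).symm⟩

theorem IsGrobnerBasisSet.preimage {N : Submodule A M'} {s : Set M}
    (hs : IsGrobnerBasisSet ℳ (N.map f) s) : IsGrobnerBasisSet ℳ' N (f ⁻¹' s) := by
  obtain ⟨hsN, hspan⟩ := hs
  have hs_range : s ⊆ Set.range f := fun _ hm ↦ (hsN hm).imp fun _ hy ↦ hy.2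
  refine ⟨fun y hy ↦ ?_, Submodule.map_injective_of_injective hinj ?_⟩
  · obtain ⟨z, hz, hzy⟩ := hsN hy
    exact hinj hzy ▸ hz
  · rw [Submodule.map_span, iniSub_map hf hinj, ← hspan, Set.image_image,
      ← Set.image_congr fun y _ ↦ ini_map ℳ ℳ' hf hinj y, ← Set.image_image,
      Set.image_preimage_eq_of_subset hs_range]

theorem GradedCoherent.of_injective [Module.Finite A M'] (h : GradedCoherent (A := A) ℳ) :
    GradedCoherent (A := A) ℳ' := by
  refine ⟨inferInstance, fun N hNfg hNhom ↦ ?_⟩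
  have := h.2 (N.map f) (hNfg.map f) (hNhom.map hf)
  exact Module.FinitePresentation.of_equiv (Submodule.equivMapOfInjective f hinj N).symm

theorem GrobnerCoherent.of_injective [Module.Finite A M'] (h : GrobnerCoherent (A := A) ℳ) :
    GrobnerCoherent (A := A) ℳ' := by
  classical
  refine ⟨h.1.of_injective hf hinj, fun N hNfg ↦ ?_⟩
  obtain ⟨s, hs⟩ := h.2 (N.map f) (hNfg.map f)
  refine ⟨s.preimage f hinj.injOn, ?_⟩
  rw [Finset.coe_preimage]
  exact hs.preimage hf hinj

end GradedSubmodule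

theorem stmt_6_general {A M : Type*} [CommRing A]
    [AddCommGroup M] [Module A M] (ℳ : ℤ → AddSubgroup M) [DirectSum.Decomposition ℳ]
    (h : GrobnerCoherent (A := A) ℳ)
    (M' : Submodule A M) (hfg : M'.FG)
    (ℳ' : ℤ → AddSubgroup M') [DirectSum.Decomposition ℳ']
    (hcompat : ∀ (n : ℤ) (y : M'), y ∈ ℳ' n ↔ (y : M) ∈ ℳ n) :
    GrobnerCoherent (A := A) ℳ' :=
  have : Module.Finite A M' := Module.Finite.iff_fg.mpr hfg
  h.of_injective (fun n y hy ↦ (hcompat n y).mp hy) M'.injective_subtype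

/-- A finitely generated homogeneous submodule of a Gröbner-coherent module is
Gröbner-coherent (with its induced grading). -/
theorem stmt_6 {A M : Type*} [CommRing A] (𝒜 : ℤ → AddSubgroup A) [GradedRing 𝒜]
    [AddCommGroup M] [Module A M] (ℳ : ℤ → AddSubgroup M) [DirectSum.Decomposition ℳ]
    [SetLike.GradedSMul 𝒜 ℳ]
    (hA : RingNonnegGraded 𝒜) (hM : ModuleBddBelow ℳ)
    (h : GrobnerCoherent (A := A) ℳ)
    (M' : Submodule A M) (hfg : M'.FG) (hhom : IsHomogSubmodule ℳ M')
    (ℳ' : ℤ → AddSubgroup M') [DirectSum.Decomposition ℳ']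
    (hcompat : ∀ (n : ℤ) (y : M'), y ∈ ℳ' n ↔ (y : M) ∈ ℳ n) :
    GrobnerCoherent (A := A) ℳ' :=
  stmt_6_general ℳ h M' hfg ℳ' hcompat
end
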